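/- arXiv:2309.14033 — 7 statements merged into one kernel-verified Lean document; each statement's English description precedes it below -/
import Mathlib

section
/- Let S ⊆ ℝⁿ, let p, q ∈ convexHull(S) with p ≠ q, and let P be the closed halfspace {x : ⟪x − p, q − p⟫ ≤ 0}. Then S ∩ P is nonempty. -/
open RealInnerProductSpace

/-- If p ≠ q lie in the convex hull of S, then S meets the closed halfspace
through p, perpendicular to q - p, on the side away from q. -/
theorem stmt_3 (n : ℕ) (S : Set (EuclideanSpace ℝ (Fin n)))
    (p q : EuclideanSpace ℝ (Fin n))
    (hp : p ∈ convexHull ℝ S) (hq : q ∈ convexHull ℝ S) (hpq : p ≠ q) :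
    (S ∩ {x | ⟪x - p, q - p⟫ ≤ (0:ℝ)}).Nonempty := by
  by_contra h
  rw [Set.not_nonempty_iff_eq_empty] at h
  have hS : S ⊆ {x | (⟪p, q - p⟫ : ℝ) < ⟪x, q - p⟫} := by
    intro x hx
    have hnot : x ∉ S ∩ {x | ⟪x - p, q - p⟫ ≤ (0:ℝ)} :=
      Set.eq_empty_iff_forall_notMem.mp h x
    have : ¬ (⟪x - p, q - p⟫ ≤ (0:ℝ)) := fun hle => hnot ⟨hx, hle⟩
    have := lt_of_not_ge this
    simpa [inner_sub_left, sub_pos] using this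
  have hconv : Convex ℝ {x : EuclideanSpace ℝ (Fin n) |
      (⟪p, q - p⟫ : ℝ) < ⟪x, q - p⟫} := by
    refine convex_halfSpace_gt ⟨?_, ?_⟩ _
    · intro a b; exact inner_add_left a b _
    · intro c a; exact real_inner_smul_left a _ c
  have hpC := hconv.convexHull_subset_iff.mpr hS hp
  simp at hpC
end

section
/- Let γ : [0,1] → ℝ² be a path of length L with endpoints a = γ(0), b = γ(1), and suppose L ≤ ‖a − b‖ + ε for some ε ≥ 0. Then for all t, dist(γ(t), segment[a,b]) ≤ √(ε · (‖a−b‖ + ε)). -/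
open Metric Set

private lemma alg_mid' (s t d w ε : ℝ) (hs0 : 0 ≤ s) (ht0 : 0 ≤ t) (hd0 : 0 < d)
    (hε : 0 ≤ ε) (cauchy2 : w ^ 2 ≤ s ^ 2 * d ^ 2)
    (ht2 : t ^ 2 = s ^ 2 - 2 * w + d ^ 2) (h : s + t ≤ d + ε)
    (hw0 : 0 ≤ w) (hwd : w ≤ d ^ 2) :
    s ^ 2 - w ^ 2 / d ^ 2 ≤ ε * (d + ε) := by
  have hsd : w ≤ s * d := by
    nlinarith [le_abs_self w, abs_nonneg w, mul_nonneg hs0 hd0.le, hw0]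
  have htd : d ^ 2 - w ≤ t * d := by
    nlinarith [mul_nonneg ht0 hd0.le]
  have hmul : (s + t) * d ≤ (d + ε) * d := mul_le_mul_of_nonneg_right h hd0.le
  have e1 : s * d - w ≤ ε * d := by nlinarith
  have e2 : t * d - (d ^ 2 - w) ≤ ε * d := by nlinarith
  have p1 : (0:ℝ) ≤ s * d + w := by positivity
  have p2 : (0:ℝ) ≤ t * d + (d ^ 2 - w) := by nlinarith [mul_nonneg ht0 hd0.le]
  have m1 : (s * d - w) * (s * d + w) ≤ ε * d * (s * d + w) :=
    mul_le_mul_of_nonneg_right e1 p1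
  have m2 : (t * d - (d ^ 2 - w)) * (t * d + (d ^ 2 - w))
      ≤ ε * d * (t * d + (d ^ 2 - w)) := mul_le_mul_of_nonneg_right e2 p2
  have m3 : ε * (s + t) * d ≤ ε * (d + ε) * d := by
    nlinarith [mul_le_mul_of_nonneg_left h hε]
  have m4 : ε * d * d ^ 2 ≤ ε * (d + ε) * d ^ 2 := by nlinarith [sq_nonneg (ε * d)]
  have key2 : s ^ 2 * d ^ 2 - w ^ 2 ≤ ε * (d + ε) * d ^ 2 := by
    nlinarith [m1, m2, m3, m4, mul_le_mul_of_nonneg_right m3 hd0.le]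
  have hrw : s ^ 2 - w ^ 2 / d ^ 2 = (s ^ 2 * d ^ 2 - w ^ 2) / d ^ 2 := by
    field_simp
  rw [hrw, div_le_iff₀ (by positivity : (0:ℝ) < d ^ 2)]
  exact key2

private lemma alg_left' (s t d w ε : ℝ) (hs0 : 0 ≤ s) (ht0 : 0 ≤ t) (hd0 : 0 < d)
    (hε : 0 ≤ ε) (cauchy2 : w ^ 2 ≤ s ^ 2 * d ^ 2)
    (ht2 : t ^ 2 = s ^ 2 - 2 * w + d ^ 2) (h : s + t ≤ d + ε)
    (hw0 : w ≤ 0) : s ^ 2 ≤ ε * (d + ε) := by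
  have htd : d ^ 2 - w ≤ t * d := by nlinarith [mul_nonneg ht0 hd0.le]
  have hmul : (s + t) * d ≤ (d + ε) * d := mul_le_mul_of_nonneg_right h hd0.le
  have e1 : s * d ≤ ε * d := by nlinarith
  have : s ≤ ε := le_of_mul_le_mul_right (by linarith) hd0
  nlinarith

private lemma alg_right' (s t d w ε : ℝ) (hs0 : 0 ≤ s) (ht0 : 0 ≤ t) (hd0 : 0 < d)
    (hε : 0 ≤ ε) (cauchy2 : w ^ 2 ≤ s ^ 2 * d ^ 2)
    (ht2 : t ^ 2 = s ^ 2 - 2 * w + d ^ 2) (h : s + t ≤ d + ε)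
    (hwd : d ^ 2 ≤ w) : t ^ 2 ≤ ε * (d + ε) := by
  have hsd : w ≤ s * d := by
    nlinarith [le_abs_self w, abs_nonneg w, mul_nonneg hs0 hd0.le]
  have hmul : (s + t) * d ≤ (d + ε) * d := mul_le_mul_of_nonneg_right h hd0.le
  have e1 : t * d ≤ ε * d := by nlinarith
  have : t ≤ ε := le_of_mul_le_mul_right (by linarith) hd0
  nlinarith

private lemma geom_aux' {E : Type*} [NormedAddCommGroup E] [InnerProductSpace ℝ E]
    (a b p : E) (ε : ℝ) (hε : 0 ≤ ε)
    (h : ‖p - a‖ + ‖p - b‖ ≤ ‖a - b‖ + ε) :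
    Metric.infDist p (segment ℝ a b) ≤ Real.sqrt (ε * (‖a - b‖ + ε)) := by
  set d := ‖a - b‖ with hd
  set s := ‖p - a‖ with hs
  set t := ‖p - b‖ with ht
  have hd0 : 0 ≤ d := norm_nonneg _
  have hs0 : 0 ≤ s := norm_nonneg _
  have ht0 : 0 ≤ t := norm_nonneg _
  have key : ∃ q ∈ segment ℝ a b, ‖p - q‖ ^ 2 ≤ ε * (d + ε) := by
    rcases eq_or_lt_of_le hd0 with hd0' | hd0'
    · have hab : a = b := by
        have : ‖a - b‖ = 0 := hd0'.symm
        rwa [norm_sub_eq_zero_iff] at this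
      refine ⟨a, left_mem_segment ℝ a b, ?_⟩
      have hts : t = s := by rw [ht, hs, hab]
      nlinarith [h]
    · set w := inner (p - a) (b - a) (𝕜 := ℝ) with hw
      have cauchy : |w| ≤ s * ‖b - a‖ := abs_real_inner_le_norm _ _
      have hba : ‖b - a‖ = d := by rw [hd, norm_sub_rev]
      rw [hba] at cauchy
      have cauchy2 : w ^ 2 ≤ s ^ 2 * d ^ 2 := by
        nlinarith [abs_nonneg w, le_abs_self w, neg_abs_le w]
      have ht2 : t ^ 2 = s ^ 2 - 2 * w + d ^ 2 := by
        have : p - b = (p - a) - (b - a) := by abel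
        rw [ht, this, norm_sub_sq_real, ← hw, hba, ← hs]
      rcases le_or_gt w 0 with hw0 | hw0
      · exact ⟨a, left_mem_segment ℝ a b,
          alg_left' s t d w ε hs0 ht0 hd0' hε cauchy2 ht2 h hw0⟩
      rcases le_or_gt (d ^ 2) w with hwd | hwd
      · refine ⟨b, right_mem_segment ℝ a b, ?_⟩
        exact alg_right' s t d w ε hs0 ht0 hd0' hε cauchy2 ht2 h hwd
      · set θ := w / d ^ 2 with hθ
        have hθ0 : 0 ≤ θ := by positivity
        have hθ1 : θ ≤ 1 := by
          rw [hθ, div_le_one (by positivity)]; exact hwd.le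
        refine ⟨a + θ • (b - a), ?_, ?_⟩
        · rw [segment_eq_image']
          exact ⟨θ, ⟨hθ0, hθ1⟩, rfl⟩
        · have hexp : ‖p - (a + θ • (b - a))‖ ^ 2 = s ^ 2 - w ^ 2 / d ^ 2 := by
            have : p - (a + θ • (b - a)) = (p - a) - θ • (b - a) := by abel
            rw [this, norm_sub_sq_real, inner_smul_right, norm_smul, ← hw, hba, ← hs]
            rw [Real.norm_eq_abs, abs_of_nonneg hθ0, hθ]
            field_simp
            ring
          rw [hexp]
          exact alg_mid' s t d w ε hs0 ht0 hd0' hε cauchy2 ht2 h hw0.le hwd.le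
  obtain ⟨q, hq, hq2⟩ := key
  have h1 : Metric.infDist p (segment ℝ a b) ≤ dist p q := Metric.infDist_le_dist_of_mem hq
  have h2 : dist p q ≤ Real.sqrt (ε * (d + ε)) := by
    rw [dist_eq_norm, Real.le_sqrt (norm_nonneg _) (by positivity)]
    exact hq2
  exact h1.trans h2

/-- A path whose length exceeds the distance between its endpoints by at most ε
stays within distance √(ε(‖a−b‖+ε)) of the segment joining its endpoints. -/
theorem stmt_11 (γ : ℝ → EuclideanSpace ℝ (Fin 2)) (L ε : ℝ)
    (hc : ContinuousOn γ (Set.Icc 0 1))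
    (hL : eVariationOn γ (Set.Icc 0 1) = ENNReal.ofReal L)
    (hε : 0 ≤ ε) (hshort : L ≤ ‖γ 0 - γ 1‖ + ε) :
    ∀ t ∈ Set.Icc (0:ℝ) 1,
      Metric.infDist (γ t) (segment ℝ (γ 0) (γ 1))
        ≤ Real.sqrt (ε * (‖γ 0 - γ 1‖ + ε)) := by
  intro t ht
  obtain ⟨ht0, ht1⟩ := ht
  -- split the variation at t
  have hsplit := eVariationOn.Icc_add_Icc γ (s := Set.Icc (0:ℝ) 1) ht0 ht1
    ⟨ht0, ht1⟩
  have h01 : Set.Icc (0:ℝ) 1 ∩ Set.Icc 0 1 = Set.Icc (0:ℝ) 1 := Set.inter_self _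
  have h0t : Set.Icc (0:ℝ) 1 ∩ Set.Icc 0 t = Set.Icc (0:ℝ) t := by
    rw [Set.Icc_inter_Icc]
    simp [ht1, le_refl]
  have ht1' : Set.Icc (0:ℝ) 1 ∩ Set.Icc t 1 = Set.Icc t 1 := by
    rw [Set.Icc_inter_Icc]
    simp [ht0, le_refl]
  rw [h0t, ht1', h01] at hsplit
  have e1 : edist (γ 0) (γ t) ≤ eVariationOn γ (Set.Icc 0 t) :=
    eVariationOn.edist_le γ (Set.left_mem_Icc.2 ht0) (Set.right_mem_Icc.2 ht0)
  have e2 : edist (γ t) (γ 1) ≤ eVariationOn γ (Set.Icc t 1) :=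
    eVariationOn.edist_le γ (Set.left_mem_Icc.2 ht1) (Set.right_mem_Icc.2 ht1)
  have etotal : edist (γ 0) (γ t) + edist (γ t) (γ 1) ≤ ENNReal.ofReal L := by
    calc edist (γ 0) (γ t) + edist (γ t) (γ 1)
        ≤ eVariationOn γ (Set.Icc 0 t) + eVariationOn γ (Set.Icc t 1) :=
          add_le_add e1 e2
      _ = eVariationOn γ (Set.Icc 0 1) := hsplit
      _ = ENNReal.ofReal L := hL
  -- convert to real statement
  have hreal : dist (γ 0) (γ t) + dist (γ t) (γ 1) ≤ ‖γ 0 - γ 1‖ + ε := by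
    have hsum : ENNReal.ofReal (dist (γ 0) (γ t) + dist (γ t) (γ 1))
        ≤ ENNReal.ofReal L := by
      rw [ENNReal.ofReal_add dist_nonneg dist_nonneg, ← edist_dist, ← edist_dist]
      exact etotal
    rcases le_or_gt 0 L with hL0 | hL0
    · have := (ENNReal.ofReal_le_ofReal_iff hL0).1 hsum
      linarith
    · have hz : ENNReal.ofReal L = 0 := ENNReal.ofReal_of_nonpos hL0.le
      rw [hz, nonpos_iff_eq_zero, ENNReal.ofReal_eq_zero] at hsum
      have : (0:ℝ) ≤ ‖γ 0 - γ 1‖ + ε := by positivity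
      linarith [dist_nonneg (x := γ 0) (y := γ t), dist_nonneg (x := γ t) (y := γ 1)]
  have h' : ‖γ t - γ 0‖ + ‖γ t - γ 1‖ ≤ ‖γ 0 - γ 1‖ + ε := by
    rw [← dist_eq_norm, ← dist_eq_norm, dist_comm (γ t) (γ 0)]
    exact hreal
  exact geom_aux' (γ 0) (γ 1) (γ t) ε hε h'
end

section
/- Let V be the closed ball in ℝ³ whose diameter is the segment from c to d (center (c+d)/2, radius ‖c−d‖/2). If p ∈ ℝ³ is a point such that ‖p − q‖ ≥ ‖c − d‖ for some q ∈ V, and ‖p − c‖ = r·‖c − d‖ with 0 < r ≤ 1, then the angle θ at c between p − c and d − c satisfies cos θ ≤ r. -/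
open RealInnerProductSpace


/-- Let V be the ball with diameter [c,d]. If some q ∈ V has ‖p−q‖ ≥ ‖c−d‖ and
‖p−c‖ = r‖c−d‖ with 0 < r ≤ 1, then the angle θ between p−c and d−c satisfies
cos θ ≤ r. -/
theorem stmt_13 (c d p q : EuclideanSpace ℝ (Fin 3)) (hcd : c ≠ d)
    (hq : q ∈ Metric.closedBall (midpoint ℝ c d) (dist c d / 2))
    (hpq : ‖c - d‖ ≤ ‖p - q‖)
    (r : ℝ) (hr0 : 0 < r) (hr1 : r ≤ 1)
    (hpc : ‖p - c‖ = r * ‖c - d‖) :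
    Real.cos (InnerProductGeometry.angle (p - c) (d - c)) ≤ r := by
  have hcd0 : (0:ℝ) < ‖c - d‖ := by
    rw [norm_pos_iff, sub_ne_zero]; exact hcd
  have hpc0 : (0:ℝ) < ‖p - c‖ := by rw [hpc]; positivity
  set m := midpoint ℝ c d with hm
  have hqm : ‖m - q‖ ≤ ‖c - d‖ / 2 := by
    rw [Metric.mem_closedBall, dist_comm] at hq
    simpa [dist_eq_norm] using hq
  have htri : ‖p - q‖ ≤ ‖p - m‖ + ‖m - q‖ := by
    have := norm_add_le (p - m) (m - q)
    simpa [sub_add_sub_cancel] using this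
  have hpm : ‖c - d‖ / 2 ≤ ‖p - m‖ := by linarith
  have hmdef : p - m = (p - c) - (2:ℝ)⁻¹ • (d - c) := by
    rw [hm, midpoint_eq_smul_add]
    ext i
    simp [PiLp.sub_apply, PiLp.smul_apply, PiLp.add_apply]
    ring
  have hdc : ‖d - c‖ = ‖c - d‖ := norm_sub_rev d c
  have hinner : ⟪p - c, d - c⟫ ≤ ‖p - c‖ ^ 2 := by
    have hsq : (‖c - d‖ / 2) ^ 2 ≤ ‖p - m‖ ^ 2 := by
      apply sq_le_sq' <;> nlinarith
    rw [hmdef, @norm_sub_sq_real, real_inner_smul_right, norm_smul, norm_inv,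
      Real.norm_ofNat, hdc] at hsq
    nlinarith
  rw [InnerProductGeometry.cos_angle]
  rw [div_le_iff₀ (mul_pos hpc0 (by rw [hdc]; exact hcd0))]
  calc ⟪p - c, d - c⟫ ≤ ‖p - c‖ ^ 2 := hinner
    _ = r * (‖p - c‖ * ‖d - c‖) := by rw [hdc]; nlinarith
end

section
/- Let T ⊆ ℝ² be a solid triangle with vertices v₁, v₂, v₃, and let f : T → ℝ³ be a 1-Lipschitz map such that ‖f(vᵢ) − f(vⱼ)‖ = ‖vᵢ − vⱼ‖ for all i, j. Then f is an isometry onto its image: ‖f(x) − f(y)‖ = ‖x − y‖ for all x, y ∈ T, and f is an affine map. -/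
/-! By polarization, the vertex distances fix the inner products of the edge vectors, so there is
an affine isometry `g` of the plane into space agreeing with `f` at the vertices. If a 1-Lipschitz
map preserves the distance between the ends of a segment, the triangle inequality is an equality
along it, and strict convexity of the target forces the map to be affine there. Hence `f = g` on
the edges, and then on each segment from a vertex to a point of the opposite edge; these segments
fill the triangle. -/

open Set

section Rigidity

variable {V W P Q : Type*}
  [NormedAddCommGroup V] [InnerProductSpace ℝ V] [MetricSpace P] [NormedAddTorsor V P]
  [NormedAddCommGroup W] [InnerProductSpace ℝ W] [MetricSpace Q] [NormedAddTorsor W Q]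

theorem inner_vsub_vsub_eq_dist_mul_self (p q r : P) :
    inner ℝ (p -ᵥ r) (q -ᵥ r) =
      (dist p r * dist p r + dist q r * dist q r - dist p q * dist p q) / 2 := by
  rw [real_inner_eq_norm_mul_self_add_norm_mul_self_sub_norm_sub_mul_self_div_two,
    vsub_sub_vsub_cancel_right, dist_eq_norm_vsub V p r, dist_eq_norm_vsub V q r,
    dist_eq_norm_vsub V p q]

theorem AffineBasis.exists_affineIsometry_of_dist_eq {ι : Type*} (b : AffineBasis ι ℝ P)
    (w : ι → Q) (hw : ∀ i j, dist (w i) (w j) = dist (b i) (b j)) :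
    ∃ g : P →ᵃⁱ[ℝ] Q, ∀ i, g (b i) = w i := by
  obtain ⟨i₀⟩ := b.nonempty
  set L := (b.basisOf i₀).constr ℝ fun j => w j -ᵥ w i₀
  have hL : ∀ j : {j // j ≠ i₀}, L (b j -ᵥ b i₀) = w j -ᵥ w i₀ := fun j => by
    rw [← b.basisOf_apply, Module.Basis.constr_basis]
  have hinner : ∀ x y, inner ℝ (L x) (L y) = inner ℝ x y := by
    suffices (innerₛₗ ℝ).compl₁₂ L L = innerₛₗ ℝ from fun x y => congr($this x y)
    refine LinearMap.ext_basis (b.basisOf i₀) (b.basisOf i₀) fun j k => ?_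
    simp only [LinearMap.compl₁₂_apply, b.basisOf_apply, hL]
    rw [innerₛₗ_apply_apply, innerₛₗ_apply_apply, inner_vsub_vsub_eq_dist_mul_self,
      inner_vsub_vsub_eq_dist_mul_self, hw, hw, hw]
  refine ⟨⟨AffineMap.mk' (fun p => L (p -ᵥ b i₀) +ᵥ w i₀) L (b i₀) fun p => by simp,
    (L.isometryOfInner hinner).norm_map⟩, fun i => ?_⟩
  show L (b i -ᵥ b i₀) +ᵥ w i₀ = w i
  by_cases hi : i = i₀
  · subst hi; simp
  · rw [hL ⟨i, hi⟩, vsub_vadd]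

end Rigidity

section Lipschitz

variable {E F : Type*} [NormedAddCommGroup E] [NormedSpace ℝ E]
  [NormedAddCommGroup F] [NormedSpace ℝ F] [StrictConvexSpace ℝ F]
  {f : E → F} {g : E →ᵃⁱ[ℝ] F} {s : Set E}

theorem LipschitzOnWith.eqOn_segment (hf : LipschitzOnWith 1 f s) {a b : E}
    (hab : segment ℝ a b ⊆ s) (ha : f a = g a) (hb : f b = g b) :
    EqOn f g (segment ℝ a b) := by
  rw [segment_eq_image_lineMap]
  rintro _ ⟨t, ⟨ht₀, ht₁⟩, rfl⟩
  set x := AffineMap.lineMap a b t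
  have hx : x ∈ segment ℝ a b := by
    rw [segment_eq_image_lineMap]; exact ⟨t, ⟨ht₀, ht₁⟩, rfl⟩
  have hfab : dist (f a) (f b) = dist a b := by rw [ha, hb, g.dist_map]
  have hax : dist (f a) (f x) ≤ t * dist a b := by
    calc dist (f a) (f x) ≤ dist a x := by
          simpa using hf.dist_le_mul a (hab (left_mem_segment ℝ a b)) x (hab hx)
      _ = t * dist a b := by
          rw [dist_comm, dist_lineMap_left, Real.norm_of_nonneg ht₀]
  have hxb : dist (f x) (f b) ≤ (1 - t) * dist a b := by
    calc dist (f x) (f b) ≤ dist x b := by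
          simpa using hf.dist_le_mul x (hab hx) b (hab (right_mem_segment ℝ a b))
      _ = (1 - t) * dist a b := by
          rw [dist_lineMap_right, Real.norm_of_nonneg (by linarith)]
  have htri := dist_triangle (f a) (f x) (f b)
  have hfx : f x = AffineMap.lineMap (f a) (f b) t :=
    eq_lineMap_of_dist_eq_mul_of_dist_eq_mul (by rw [hfab]; linarith) (by rw [hfab]; linarith)
  rw [hfx, ha, hb]
  exact (g.toAffineMap.apply_lineMap a b t).symm

theorem LipschitzOnWith.eqOn_convexHull (hf : LipschitzOnWith 1 f (convexHull ℝ s))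
    (hfg : EqOn f g s) : EqOn f g (convexHull ℝ s) := by
  classical
  rw [convexHull_eq_union_convexHull_finite_subsets]
  simp only [EqOn, mem_iUnion]
  rintro x ⟨t, hts, hx⟩
  induction t using Finset.induction_on generalizing x with
  | empty => simp at hx
  | insert a t _ ih =>
    have hat : insert a (t : Set E) ⊆ s := by simpa using hts
    rcases t.eq_empty_or_nonempty with rfl | ht
    · simp only [Finset.insert_empty, Finset.coe_singleton, convexHull_singleton,
        mem_singleton_iff] at hx
      exact hx ▸ hfg (hat (mem_insert a _))
    · rw [Finset.coe_insert, convexHull_insert (by simpa using ht), mem_convexJoin] at hx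
      obtain ⟨a, rfl, p, hp, hx⟩ := hx
      have hts' : (t : Set E) ⊆ s := subset_insert a _ |>.trans hat
      have has : a ∈ s := hat (mem_insert a _)
      refine hf.eqOn_segment ?_ (hfg has) (ih hts' hp) hx
      exact (convex_convexHull ℝ s).segment_subset (subset_convexHull ℝ s has)
        (convexHull_mono hts' hp)

end Lipschitz

/-- A 1-Lipschitz map on a solid triangle that preserves the pairwise distances
between the vertices is an isometry onto its image, and is affine. -/
theorem stmt_14 (v : Fin 3 → EuclideanSpace ℝ (Fin 2))
    (hv : AffineIndependent ℝ v)
    (f : EuclideanSpace ℝ (Fin 2) → EuclideanSpace ℝ (Fin 3))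
    (hf : LipschitzOnWith 1 f (convexHull ℝ (Set.range v)))
    (hvert : ∀ i j, dist (f (v i)) (f (v j)) = dist (v i) (v j)) :
    (∀ x ∈ convexHull ℝ (Set.range v), ∀ y ∈ convexHull ℝ (Set.range v),
        dist (f x) (f y) = dist x y) ∧
      ∃ g : EuclideanSpace ℝ (Fin 2) →ᵃ[ℝ] EuclideanSpace ℝ (Fin 3),
        Set.EqOn f g (convexHull ℝ (Set.range v)) := by
  have hspan : affineSpan ℝ (range v) = ⊤ :=
    hv.affineSpan_eq_top_iff_card_eq_finrank_add_one.mpr (by simp)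
  obtain ⟨g, hg⟩ := (AffineBasis.mk v hv hspan).exists_affineIsometry_of_dist_eq (f ∘ v) hvert
  have hfg : EqOn f g (convexHull ℝ (range v)) :=
    hf.eqOn_convexHull (by rintro _ ⟨i, rfl⟩; exact (hg i).symm)
  exact ⟨fun x hx y hy => by rw [hfg hx, hfg hy, g.dist_map], g.toAffineMap, hfg⟩
end

section
/- Let f : T → ℝ³ be a 1-Lipschitz map on a solid triangle T ⊆ ℝ² with vertices v₁, v₂, v₃, such that for each edge [vᵢ, vⱼ] of T, f restricted to that edge preserves distances to within ε: ‖f(vᵢ) − f(vⱼ)‖ ≥ ‖vᵢ − vⱼ‖ − ε. Then for every x ∈ T and every vertex vᵢ, |‖f(x) − f(vᵢ)‖ − ‖x − vᵢ‖| ≤ C√ε, where C depends only on T. -/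
lemma key_id {E : Type*} [NormedAddCommGroup E] [InnerProductSpace ℝ E]
    (P F₀ F₁ F₂ : E) (l₀ l₁ l₂ : ℝ) (h : l₀ + l₁ + l₂ = 1) :
    ‖P - (l₀ • F₀ + l₁ • F₁ + l₂ • F₂)‖^2 =
      l₀ * ‖P - F₀‖^2 + l₁ * ‖P - F₁‖^2 + l₂ * ‖P - F₂‖^2
      - (l₀*l₁*‖F₀-F₁‖^2 + l₀*l₂*‖F₀-F₂‖^2 + l₁*l₂*‖F₁-F₂‖^2) := by
  have h2 : l₂ = 1 - l₀ - l₁ := by linarith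
  subst h2
  simp only [← real_inner_self_eq_norm_sq, inner_sub_left, inner_sub_right,
    inner_add_left, inner_add_right, real_inner_smul_left, real_inner_smul_right]
  rw [real_inner_comm F₀ P, real_inner_comm F₁ P, real_inner_comm F₂ P,
    real_inner_comm F₁ F₀, real_inner_comm F₂ F₀, real_inner_comm F₂ F₁]
  ring

lemma sq_low_aux {d n R e : ℝ} (he : 0 ≤ e) (hd : 0 ≤ d) (hn : 0 ≤ n)
    (h1 : d - e ≤ n) (h2 : d ≤ R) (h3 : n ≤ d) : d^2 - 2*R*e ≤ n^2 := by
  nlinarith [mul_nonneg he (by linarith : (0:ℝ) ≤ R - n),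
    mul_nonneg he (by linarith : (0:ℝ) ≤ R - d),
    mul_nonneg (by linarith : (0:ℝ) ≤ n - d + e) (by linarith : (0:ℝ) ≤ n + d)]

lemma sqrt_lower_aux {B m s : ℝ} (hB : 0 ≤ B) (hm : 0 ≤ m) (hs : 0 ≤ s)
    (h : m^2 - s^2 ≤ B^2) : m - s ≤ B := by
  rcases le_or_gt m s with h' | h'
  · linarith
  · nlinarith

set_option maxHeartbeats 1600000 in
/-- Quantitative rigidity: there is a constant C, depending only on the
triangle, such that any 1-Lipschitz map nearly preserving the pairwise vertex
distances (to within ε) nearly preserves all distances to the vertices, up to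
C√ε. -/
theorem stmt_15 (v : Fin 3 → EuclideanSpace ℝ (Fin 2))
    (hv : AffineIndependent ℝ v) :
    ∃ C : ℝ, 0 < C ∧ ∀ ε : ℝ, 0 ≤ ε →
      ∀ f : EuclideanSpace ℝ (Fin 2) → EuclideanSpace ℝ (Fin 3),
        LipschitzOnWith 1 f (convexHull ℝ (Set.range v)) →
        (∀ i j, dist (v i) (v j) - ε ≤ dist (f (v i)) (f (v j))) →
        ∀ x ∈ convexHull ℝ (Set.range v), ∀ i,
          |dist (f x) (f (v i)) - dist x (v i)| ≤ C * Real.sqrt ε := by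
  set R : ℝ := dist (v 0) (v 1) + dist (v 0) (v 2) + dist (v 1) (v 2) with hR
  have hR0 : 0 ≤ R := by positivity
  refine ⟨2 * Real.sqrt (2 * R) + 1, by positivity, ?_⟩
  intro ε hε f hf hvd x hx i
  -- every pairwise distance is ≤ R
  have hdR : ∀ j k : Fin 3, dist (v j) (v k) ≤ R := by
    have h01 : (0:ℝ) ≤ dist (v 0) (v 1) := dist_nonneg
    have h02 : (0:ℝ) ≤ dist (v 0) (v 2) := dist_nonneg
    have h12 : (0:ℝ) ≤ dist (v 1) (v 2) := dist_nonneg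
    have e10 : dist (v 1) (v 0) = dist (v 0) (v 1) := dist_comm _ _
    have e20 : dist (v 2) (v 0) = dist (v 0) (v 2) := dist_comm _ _
    have e21 : dist (v 2) (v 1) = dist (v 1) (v 2) := dist_comm _ _
    have s0 : dist (v 0) (v 0) = 0 := dist_self _
    have s1 : dist (v 1) (v 1) = 0 := dist_self _
    have s2 : dist (v 2) (v 2) = 0 := dist_self _
    intro j k
    fin_cases j <;> fin_cases k <;>
      simp only [Fin.zero_eta, Fin.mk_one, show (⟨2, by omega⟩ : Fin 3) = 2 from rfl] <;>
      linarith
  -- extract convex combination weights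
  have hx' := hx
  rw [convexHull_range_eq_exists_affineCombination] at hx'
  obtain ⟨s, w, hw0, hw1, hwx⟩ := hx'
  obtain ⟨l, hl0, hl1, hlx⟩ : ∃ l : Fin 3 → ℝ, (∀ j, 0 ≤ l j) ∧ l 0 + l 1 + l 2 = 1 ∧
      x = l 0 • v 0 + l 1 • v 1 + l 2 • v 2 := by
    refine ⟨fun j => if j ∈ s then w j else 0, ?_, ?_, ?_⟩
    · intro j; dsimp only; split
      · exact hw0 _ ‹_›
      · exact le_refl 0
    · have h3 : ∑ j : Fin 3, (if j ∈ s then w j else 0) = 1 := by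
        rw [Finset.sum_ite_mem, Finset.univ_inter, hw1]
      rw [Fin.sum_univ_three] at h3
      exact h3
    · have h1 : s.affineCombination ℝ v w = ∑ j ∈ s, w j • v j :=
        s.affineCombination_eq_linear_combination v w hw1
      have h2 : ∑ j : Fin 3, (if j ∈ s then w j else 0) • v j = ∑ j ∈ s, w j • v j := by
        simp only [ite_smul, zero_smul]
        rw [Finset.sum_ite_mem, Finset.univ_inter]
      rw [← hwx, h1, ← h2, Fin.sum_univ_three]
  -- notation
  set F : Fin 3 → EuclideanSpace ℝ (Fin 3) := fun j => f (v j) with hF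
  have hmem : ∀ j, v j ∈ convexHull ℝ (Set.range v) :=
    fun j => subset_convexHull ℝ _ ⟨j, rfl⟩
  have hlip : ∀ a ∈ convexHull ℝ (Set.range v), ∀ b ∈ convexHull ℝ (Set.range v),
      dist (f a) (f b) ≤ dist a b := by
    intro a ha b hb
    have := hf.dist_le_mul a ha b hb
    simpa using this
  -- squared-distance bounds on the image of the vertices
  have hFup : ∀ j k, ‖F j - F k‖ ≤ ‖v j - v k‖ := by
    intro j k
    rw [← dist_eq_norm, ← dist_eq_norm]
    exact hlip _ (hmem j) _ (hmem k)
  have hFup2 : ∀ j k, ‖F j - F k‖^2 ≤ ‖v j - v k‖^2 :=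
    fun j k => pow_le_pow_left₀ (norm_nonneg _) (hFup j k) 2
  have hFlow : ∀ j k, ‖v j - v k‖^2 - 2*R*ε ≤ ‖F j - F k‖^2 := by
    intro j k
    have h1 : ‖v j - v k‖ - ε ≤ ‖F j - F k‖ := by
      rw [← dist_eq_norm, ← dist_eq_norm]; exact hvd j k
    have h2 : ‖v j - v k‖ ≤ R := by rw [← dist_eq_norm]; exact hdR j k
    exact sq_low_aux hε (norm_nonneg _) (norm_nonneg _) h1 h2 (hFup j k)
  -- pre-image identities
  have idx := key_id x (v 0) (v 1) (v 2) (l 0) (l 1) (l 2) hl1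
  rw [← hlx, sub_self, norm_zero] at idx
  have idvi := key_id (v i) (v 0) (v 1) (v 2) (l 0) (l 1) (l 2) hl1
  rw [← hlx] at idvi
  -- image identities
  have idA := key_id (f x) (F 0) (F 1) (F 2) (l 0) (l 1) (l 2) hl1
  have idB := key_id (f (v i)) (F 0) (F 1) (F 2) (l 0) (l 1) (l 2) hl1
  set A : ℝ := ‖f x - (l 0 • F 0 + l 1 • F 1 + l 2 • F 2)‖ with hA
  set B : ℝ := ‖f (v i) - (l 0 • F 0 + l 1 • F 1 + l 2 • F 2)‖ with hB
  -- f x to image vertices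
  have hfx2 : ∀ j, ‖f x - F j‖^2 ≤ ‖x - v j‖^2 := by
    intro j
    refine pow_le_pow_left₀ (norm_nonneg _) ?_ 2
    rw [← dist_eq_norm, ← dist_eq_norm]
    exact hlip _ hx _ (hmem j)
  have hpairs : l 0 * l 1 + l 0 * l 2 + l 1 * l 2 ≤ 1 := by
    nlinarith [sq_nonneg (l 0), sq_nonneg (l 1), sq_nonneg (l 2),
      mul_nonneg (hl0 0) (hl0 1), mul_nonneg (hl0 0) (hl0 2), mul_nonneg (hl0 1) (hl0 2), hl1]
  -- Step A : A^2 ≤ 2Rε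
  have hAsq : A^2 ≤ 2*R*ε := by
    have p0 := mul_nonneg (hl0 0) (sub_nonneg.2 (hfx2 0))
    have p1 := mul_nonneg (hl0 1) (sub_nonneg.2 (hfx2 1))
    have p2 := mul_nonneg (hl0 2) (sub_nonneg.2 (hfx2 2))
    have q01 := mul_nonneg (mul_nonneg (hl0 0) (hl0 1)) (sub_nonneg.2 (hFlow 0 1))
    have q02 := mul_nonneg (mul_nonneg (hl0 0) (hl0 2)) (sub_nonneg.2 (hFlow 0 2))
    have q12 := mul_nonneg (mul_nonneg (hl0 1) (hl0 2)) (sub_nonneg.2 (hFlow 1 2))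
    have hRe : 0 ≤ 2*R*ε * (1 - (l 0 * l 1 + l 0 * l 2 + l 1 * l 2)) :=
      mul_nonneg (by positivity) (by linarith)
    linarith only [idA, idx, p0, p1, p2, q01, q02, q12, hRe]
  -- Step B : B^2 ≥ ‖v i - x‖^2 - 2Rε
  have hBsq : ‖v i - x‖^2 - 2*R*ε ≤ B^2 := by
    have p0 := mul_nonneg (hl0 0) (sub_nonneg.2 (hFlow i 0))
    have p1 := mul_nonneg (hl0 1) (sub_nonneg.2 (hFlow i 1))
    have p2 := mul_nonneg (hl0 2) (sub_nonneg.2 (hFlow i 2))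
    have q01 := mul_nonneg (mul_nonneg (hl0 0) (hl0 1)) (sub_nonneg.2 (hFup2 0 1))
    have q02 := mul_nonneg (mul_nonneg (hl0 0) (hl0 2)) (sub_nonneg.2 (hFup2 0 2))
    have q12 := mul_nonneg (mul_nonneg (hl0 1) (hl0 2)) (sub_nonneg.2 (hFup2 1 2))
    have hFi : ∀ j, ‖f (v i) - F j‖ = ‖F i - F j‖ := fun j => rfl
    simp only [hFi] at idB
    have hsum : 2*R*ε*(l 0) + 2*R*ε*(l 1) + 2*R*ε*(l 2) = 2*R*ε := by
      linear_combination (2*R*ε) * hl1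
    linarith only [idB, idvi, p0, p1, p2, q01, q02, q12, hsum]
  -- square roots
  set sq : ℝ := Real.sqrt (2*R*ε) with hsq
  have hsq0 : 0 ≤ sq := Real.sqrt_nonneg _
  have hsq2 : sq^2 = 2*R*ε := Real.sq_sqrt (by positivity)
  have hA0 : 0 ≤ A := norm_nonneg _
  have hB0 : 0 ≤ B := norm_nonneg _
  have hAle : A ≤ sq := by
    rw [show A = Real.sqrt (A^2) from (Real.sqrt_sq hA0).symm, hsq]
    exact Real.sqrt_le_sqrt hAsq
  have hBge : ‖v i - x‖ - sq ≤ B :=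
    sqrt_lower_aux hB0 (norm_nonneg _) hsq0 (by linarith only [hBsq, hsq2])
  -- triangle inequality
  have htri : B ≤ dist (f (v i)) (f x) + A := by
    have := dist_triangle (f (v i)) (f x) (l 0 • F 0 + l 1 • F 1 + l 2 • F 2)
    simpa [hA, hB, dist_eq_norm] using this
  -- assemble
  have hup : dist (f x) (f (v i)) ≤ dist x (v i) := hlip _ hx _ (hmem i)
  have hlow : dist x (v i) - 2*sq ≤ dist (f x) (f (v i)) := by
    have h1 : ‖v i - x‖ = dist x (v i) := by rw [← dist_eq_norm, dist_comm]
    have h2 : dist (f (v i)) (f x) = dist (f x) (f (v i)) := dist_comm _ _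
    linarith only [htri, hBge, hAle, h1.symm ▸ hBge, h1, h2]
  have hsqmul : sq ≤ Real.sqrt (2*R) * Real.sqrt ε := by
    rw [hsq, Real.sqrt_mul (by positivity)]
  have hse : 0 ≤ Real.sqrt ε := Real.sqrt_nonneg _
  have hCe : 0 ≤ (2 * Real.sqrt (2 * R) + 1) * Real.sqrt ε := by positivity
  rw [abs_le]
  constructor
  · have h3 : 2*sq ≤ (2 * Real.sqrt (2 * R)) * Real.sqrt ε := by linarith only [hsqmul]
    have h4 : (2 * Real.sqrt (2 * R)) * Real.sqrt ε ≤ (2 * Real.sqrt (2 * R) + 1) * Real.sqrt ε := by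
      have : 0 ≤ Real.sqrt (2*R) := Real.sqrt_nonneg _
      nlinarith [hse]
    linarith only [hlow, h3, h4]
  · linarith only [hup, hCe]
end

section
/- Let A and B be parallel segments in ℝ² ⊆ ℝ³, each of length at least 1 (B the orthogonal projection of a segment v lying in a plane parallel to ℝ²). Suppose two arcs C₁, C₂ in ℝ², with C₁ joining endpoint A₁ of A to endpoint B₁ of B and C₂ joining A₂ to B₂, intersect at x, and length(C₁) + length(C₂) ≤ 2 + ε. Then dist(x, A) ≤ ε and dist(x, B) ≤ ε. -/
/-!
Cutting `γᵢ` at `x` gives `dist Aᵢ x + dist x Bᵢ ≤ Lᵢ`, so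
`(dist x A₁ + dist x A₂) + (dist x B₁ + dist x B₂) ≤ 2 + ε`. The second bracket is at least
`dist B₁ B₂ ≥ 1`, so `x` lies inside the ellipse with foci `A₁`, `A₂` and major axis `1 + ε`,
every point of which is within the semi-minor axis `√((1 + ε)² - 1) / 2` of `[A₁, A₂]`;
symmetrically for `[B₁, B₂]`.
-/

open Metric Set AffineMap

section InnerProductSpace

variable {E : Type*} [NormedAddCommGroup E] [InnerProductSpace ℝ E]

theorem dist_lineMap_sq (p a b : E) (t : ℝ) :
    dist p (lineMap a b t) ^ 2 =
      (1 - t) * dist p a ^ 2 + t * dist p b ^ 2 - t * (1 - t) * dist a b ^ 2 := by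
  have hsplit : p - lineMap a b t = (1 - t) • (p - a) + t • (p - b) := by
    rw [lineMap_apply_module]; module
  have hab : a - b = (p - b) - (p - a) := by abel
  simp only [dist_eq_norm, hsplit, hab, norm_add_sq_real, norm_sub_sq_real, norm_smul,
    real_inner_smul_left, real_inner_smul_right, Real.norm_eq_abs, mul_pow, sq_abs,
    real_inner_comm (p - a)]
  ring

theorem four_mul_infDist_segment_sq_le {p a b : E} {s : ℝ} (hs : dist p a + dist p b ≤ s) :
    4 * infDist p (segment ℝ a b) ^ 2 ≤ s ^ 2 - dist a b ^ 2 := by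
  obtain ⟨u, hu⟩ : ∃ u, u = dist p a := ⟨_, rfl⟩
  obtain ⟨v, hv⟩ : ∃ v, v = dist p b := ⟨_, rfl⟩
  have hu0 : 0 ≤ u := hu ▸ dist_nonneg
  have hv0 : 0 ≤ v := hv ▸ dist_nonneg
  -- the point of `[a, b]` dividing it in the ratio `u : v`; its squared distance to `p` is
  -- `t (1 - t) ((u + v) ^ 2 - dist a b ^ 2)` and `4 t (1 - t) ≤ 1`
  set t := u / (u + v)
  have huv : u = t * (u + v) ∧ v = (1 - t) * (u + v) := by
    rcases eq_or_lt_of_le (add_nonneg hu0 hv0) with h | h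
    · rw [← h, mul_zero, mul_zero]; constructor <;> linarith
    · have htw : t * (u + v) = u := div_mul_cancel₀ u h.ne'
      constructor <;> linarith
  have hsum : (1 - t) * u ^ 2 + t * v ^ 2 = t * (1 - t) * (u + v) ^ 2 := by
    linear_combination (1 - t) * (u + t * (u + v)) * huv.1 + t * (v + (1 - t) * (u + v)) * huv.2
  have ht : t ∈ Icc (0 : ℝ) 1 :=
    ⟨div_nonneg hu0 (add_nonneg hu0 hv0),
      div_le_one_of_le₀ (le_add_of_nonneg_right hv0) (add_nonneg hu0 hv0)⟩
  have hmem : lineMap a b t ∈ segment ℝ a b := by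
    rw [segment_eq_image_lineMap]; exact mem_image_of_mem _ ht
  have hinf : infDist p (segment ℝ a b) ^ 2 ≤ dist p (lineMap a b t) ^ 2 :=
    pow_le_pow_left₀ infDist_nonneg (infDist_le_dist_of_mem hmem) 2
  have hd : dist a b ≤ u + v := hu ▸ hv ▸ dist_triangle_left a b p
  have hs' : (u + v) ^ 2 ≤ s ^ 2 := pow_le_pow_left₀ (add_nonneg hu0 hv0) (hu ▸ hv ▸ hs) 2
  rw [dist_lineMap_sq, ← hu, ← hv, hsum] at hinf
  nlinarith [sq_nonneg (2 * t - 1), mul_self_le_mul_self dist_nonneg hd]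

theorem infDist_segment_le_sqrt_of_dist_add_dist_le {a₁ a₂ b₁ b₂ x : E} {ε : ℝ}
    (ha : 1 ≤ dist a₁ a₂) (hb : 1 ≤ dist b₁ b₂)
    (h : dist x a₁ + dist x a₂ + (dist x b₁ + dist x b₂) ≤ 2 + ε) :
    infDist x (segment ℝ a₁ a₂) ≤ √(ε * (2 + ε)) := by
  have hb' : dist b₁ b₂ ≤ dist x b₁ + dist x b₂ := dist_triangle_left b₁ b₂ x
  have hS : 0 ≤ dist x a₁ + dist x a₂ := add_nonneg dist_nonneg dist_nonneg
  have hell := four_mul_infDist_segment_sq_le (le_refl (dist x a₁ + dist x a₂))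
  refine (le_abs_self _).trans (Real.abs_le_sqrt ?_)
  nlinarith [sq_nonneg (infDist x (segment ℝ a₁ a₂))]

end InnerProductSpace

theorem eVariationOn.edist_add_edist_le {α : Type*} [PseudoEMetricSpace α] (γ : ℝ → α)
    {a b t : ℝ} (ht : t ∈ Icc a b) :
    edist (γ a) (γ t) + edist (γ t) (γ b) ≤ eVariationOn γ (Icc a b) := by
  have hsplit := eVariationOn.Icc_add_Icc γ (s := univ) ht.1 ht.2 (mem_univ t)
  simp only [univ_inter] at hsplit
  rw [← hsplit]
  exact add_le_add (eVariationOn.edist_le γ (left_mem_Icc.mpr ht.1) (right_mem_Icc.mpr ht.1))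
    (eVariationOn.edist_le γ (left_mem_Icc.mpr ht.2) (right_mem_Icc.mpr ht.2))

theorem dist_add_dist_le_or_eq_of_eVariationOn_eq_ofReal {α : Type*} [MetricSpace α]
    {γ : ℝ → α} {a b t L : ℝ} (ht : t ∈ Icc a b)
    (hL : eVariationOn γ (Icc a b) = ENNReal.ofReal L) :
    dist (γ a) (γ t) + dist (γ t) (γ b) ≤ L ∨ γ a = γ t ∧ γ t = γ b := by
  have h := eVariationOn.edist_add_edist_le γ ht
  rw [hL, edist_dist, edist_dist, ← ENNReal.ofReal_add dist_nonneg dist_nonneg,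
    ENNReal.ofReal_le_ofReal_iff'] at h
  refine h.imp_right fun h ↦ ?_
  rw [← dist_le_zero, ← dist_le_zero]
  constructor <;> linarith [dist_nonneg (x := γ a) (y := γ t), dist_nonneg (x := γ t) (y := γ b)]

theorem stmt_16_general (A₁ A₂ B₁ B₂ : EuclideanSpace ℝ (Fin 2))
    (hA : 1 ≤ dist A₁ A₂) (hB : 1 ≤ dist B₁ B₂)
    (γ₁ γ₂ : ℝ → EuclideanSpace ℝ (Fin 2)) (L₁ L₂ ε : ℝ)
    (h₁0 : γ₁ 0 = A₁) (h₁1 : γ₁ 1 = B₁)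
    (h₂0 : γ₂ 0 = A₂) (h₂1 : γ₂ 1 = B₂)
    (hL₁ : eVariationOn γ₁ (Set.Icc 0 1) = ENNReal.ofReal L₁)
    (hL₂ : eVariationOn γ₂ (Set.Icc 0 1) = ENNReal.ofReal L₂)
    (hshort : L₁ + L₂ ≤ 2 + ε)
    (x : EuclideanSpace ℝ (Fin 2))
    (hx₁ : x ∈ γ₁ '' Set.Icc 0 1) (hx₂ : x ∈ γ₂ '' Set.Icc 0 1) :
    Metric.infDist x (segment ℝ A₁ A₂) ≤ Real.sqrt (ε * (2 + ε)) ∧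
      Metric.infDist x (segment ℝ B₁ B₂) ≤ Real.sqrt (ε * (2 + ε)) := by
  obtain ⟨t₁, ht₁, hxt₁⟩ := hx₁
  obtain ⟨t₂, ht₂, hxt₂⟩ := hx₂
  have hr : 0 ≤ √(ε * (2 + ε)) := Real.sqrt_nonneg _
  -- `ENNReal.ofReal` truncates a negative `Lᵢ` to `0`; then `γᵢ` is constant and `x` is an
  -- endpoint of both segments
  rcases (dist_add_dist_le_or_eq_of_eVariationOn_eq_ofReal ht₁ hL₁).symm with
    ⟨hA₁, hB₁⟩ | h₁
  · rw [← hxt₁, ← h₁0, ← h₁1, ← hB₁, hA₁]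
    exact ⟨(infDist_zero_of_mem (left_mem_segment ℝ _ _)).trans_le hr,
      (infDist_zero_of_mem (left_mem_segment ℝ _ _)).trans_le hr⟩
  rcases (dist_add_dist_le_or_eq_of_eVariationOn_eq_ofReal ht₂ hL₂).symm with
    ⟨hA₂, hB₂⟩ | h₂
  · rw [← hxt₂, ← h₂0, ← h₂1, ← hB₂, hA₂]
    exact ⟨(infDist_zero_of_mem (right_mem_segment ℝ _ _)).trans_le hr,
      (infDist_zero_of_mem (right_mem_segment ℝ _ _)).trans_le hr⟩
  rw [hxt₁, h₁0, h₁1] at h₁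
  rw [hxt₂, h₂0, h₂1] at h₂
  have hsum : dist x A₁ + dist x A₂ + (dist x B₁ + dist x B₂) ≤ 2 + ε := by
    rw [dist_comm _ A₁, dist_comm _ A₂]; linarith
  exact ⟨infDist_segment_le_sqrt_of_dist_add_dist_le hA hB hsum,
    infDist_segment_le_sqrt_of_dist_add_dist_le hB hA (by linarith)⟩

/-- Two parallel segments of length ≥ 1 in the plane, joined by arcs C₁ (A₁→B₁)
and C₂ (A₂→B₂) meeting at x with total length at most 2 + ε: then x is within
√(ε(2+ε)) of each segment. -/
theorem stmt_16 (A₁ A₂ B₁ B₂ : EuclideanSpace ℝ (Fin 2))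
    (hA : 1 ≤ dist A₁ A₂) (hB : 1 ≤ dist B₁ B₂)
    (hpar : ∃ k : ℝ, B₂ - B₁ = k • (A₂ - A₁))
    (γ₁ γ₂ : ℝ → EuclideanSpace ℝ (Fin 2)) (L₁ L₂ ε : ℝ) (hε : 0 ≤ ε)
    (hc₁ : ContinuousOn γ₁ (Set.Icc 0 1)) (hc₂ : ContinuousOn γ₂ (Set.Icc 0 1))
    (h₁0 : γ₁ 0 = A₁) (h₁1 : γ₁ 1 = B₁)
    (h₂0 : γ₂ 0 = A₂) (h₂1 : γ₂ 1 = B₂)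
    (hL₁ : eVariationOn γ₁ (Set.Icc 0 1) = ENNReal.ofReal L₁)
    (hL₂ : eVariationOn γ₂ (Set.Icc 0 1) = ENNReal.ofReal L₂)
    (hshort : L₁ + L₂ ≤ 2 + ε)
    (x : EuclideanSpace ℝ (Fin 2))
    (hx₁ : x ∈ γ₁ '' Set.Icc 0 1) (hx₂ : x ∈ γ₂ '' Set.Icc 0 1) :
    Metric.infDist x (segment ℝ A₁ A₂) ≤ Real.sqrt (ε * (2 + ε)) ∧
      Metric.infDist x (segment ℝ B₁ B₂) ≤ Real.sqrt (ε * (2 + ε)) :=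
  stmt_16_general A₁ A₂ B₁ B₂ hA hB γ₁ γ₂ L₁ L₂ ε h₁0 h₁1 h₂0 h₂1 hL₁ hL₂ hshort x hx₁ hx₂
end

section
/- Let a, b, c, d ∈ ℝ³ with ‖a − b‖ = ‖c − d‖ = 1, ‖b − c‖ ≤ δ, and ‖a − d‖ ≤ √2 + δ. Then the angle θ between the vectors a − c and d − b satisfies cos θ ≥ −Cδ for a constant C depending only on the configuration bounds (e.g., C = 10 works when δ ≤ 1/10). Equivalently, θ ≤ π/2 + C'√δ. -/
/-!
The angle is controlled by the law of cosines: `‖u - v‖² = ‖u‖² + ‖v‖² - 2‖u‖‖v‖ cos θ ≥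
2‖u‖‖v‖ (1 - cos θ)`. For `u = a - c`, `v = d - b` the triangle inequality gives
`‖u‖, ‖v‖ ≥ 1 - δ` and `‖u - v‖ = ‖(a - d) + (b - c)‖ ≤ √2 + 2δ`, so
`1 - cos θ ≤ (√2 + 2δ)² / (2 (1 - δ)²)`, which is at most `1 + 10δ` for `δ ≤ 1/10`.
-/

open InnerProductGeometry

namespace InnerProductGeometry

variable {V : Type*} [NormedAddCommGroup V] [InnerProductSpace ℝ V]

theorem two_mul_norm_mul_norm_mul_one_sub_cos_angle_le (x y : V) :
    2 * ‖x‖ * ‖y‖ * (1 - Real.cos (angle x y)) ≤ ‖x - y‖ ^ 2 := by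
  have hcos := norm_sub_sq_eq_norm_sq_add_norm_sq_sub_two_mul_norm_mul_norm_mul_cos_angle x y
  nlinarith [sq_nonneg (‖x‖ - ‖y‖)]

theorem one_sub_div_le_cos_angle {x y : V} {r s : ℝ} (hr : 0 < r) (hx : r ≤ ‖x‖) (hy : r ≤ ‖y‖)
    (hxy : ‖x - y‖ ≤ s) : 1 - s ^ 2 / (2 * r ^ 2) ≤ Real.cos (angle x y) := by
  have hcos : 0 ≤ 1 - Real.cos (angle x y) := sub_nonneg.2 (Real.cos_le_one _)
  have hrr : r ^ 2 ≤ ‖x‖ * ‖y‖ := by nlinarith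
  have : 2 * r ^ 2 * (1 - Real.cos (angle x y)) ≤ s ^ 2 :=
    calc 2 * r ^ 2 * (1 - Real.cos (angle x y))
        ≤ 2 * ‖x‖ * ‖y‖ * (1 - Real.cos (angle x y)) := by nlinarith
      _ ≤ ‖x - y‖ ^ 2 := two_mul_norm_mul_norm_mul_one_sub_cos_angle_le x y
      _ ≤ s ^ 2 := pow_le_pow_left₀ (norm_nonneg _) hxy 2
  rw [sub_le_comm, le_div_iff₀ (by positivity)]
  linarith

end InnerProductGeometry

theorem neg_ten_mul_le_one_sub_sq_div {δ : ℝ} (hδ0 : 0 ≤ δ) (hδ : δ ≤ 1 / 10) :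
    -(10 * δ) ≤ 1 - (Real.sqrt 2 + 2 * δ) ^ 2 / (2 * (1 - δ) ^ 2) := by
  have hsqrt : Real.sqrt 2 ^ 2 = 2 := Real.sq_sqrt zero_le_two
  have hsqrt_le : Real.sqrt 2 ≤ 3 / 2 := by nlinarith [Real.sqrt_nonneg 2]
  rw [le_sub_comm, div_le_iff₀ (by nlinarith)]
  nlinarith [mul_nonneg hδ0 hδ0, mul_nonneg hδ0 (sub_nonneg.2 hsqrt_le)]

/-- If ‖a−b‖ = ‖c−d‖ = 1, ‖b−c‖ ≤ δ and ‖a−d‖ ≤ √2 + δ with 0 ≤ δ ≤ 1/10, then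
the angle θ between a−c and d−b satisfies cos θ ≥ −10δ. -/
theorem stmt_18 (a b c d : EuclideanSpace ℝ (Fin 3)) (δ : ℝ)
    (hδ0 : 0 ≤ δ) (hδ : δ ≤ 1 / 10)
    (hab : ‖a - b‖ = 1) (hcd : ‖c - d‖ = 1)
    (hbc : ‖b - c‖ ≤ δ) (had : ‖a - d‖ ≤ Real.sqrt 2 + δ) :
    -(10 * δ) ≤ Real.cos (InnerProductGeometry.angle (a - c) (d - b)) := by
  have hcb : ‖c - b‖ ≤ δ := norm_sub_rev b c ▸ hbc
  have hu : 1 - δ ≤ ‖a - c‖ := by linarith [norm_sub_le_norm_sub_add_norm_sub a c b]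
  have hv : 1 - δ ≤ ‖d - b‖ := by
    linarith [norm_sub_le_norm_sub_add_norm_sub c b d, norm_sub_rev b d]
  have huv : ‖(a - c) - (d - b)‖ ≤ Real.sqrt 2 + 2 * δ :=
    calc ‖(a - c) - (d - b)‖ = ‖(a - d) + (b - c)‖ := by congr 1; abel
      _ ≤ ‖a - d‖ + ‖b - c‖ := norm_add_le _ _
      _ ≤ Real.sqrt 2 + 2 * δ := by linarith
  exact (neg_ten_mul_le_one_sub_sq_div hδ0 hδ).trans
    (one_sub_div_le_cos_angle (by linarith) hu hv huv)
end
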